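/- arXiv:1509.03294 — 13 statements merged into one kernel-verified Lean document; each statement's English description precedes it below -/
import Mathlib

section
/- Let V = ℕ →₀ ℂ with standard basis vectors e i (i ∈ ℕ). Suppose g : V ≃ₗ[ℂ] V is a ℂ-linear automorphism and S ⊆ ℕ is a finite set such that g (e i) = e i for every i ∉ S. Then the subspace U := span_ℂ ({e j | j ∈ S} ∪ {g (e j) | j ∈ S}) is finite-dimensional, g maps U onto U (i.e. the image of U under g equals U), and U ⊔ span_ℂ {e i | i ∉ S} = ⊤. -/
/-! Every `v` differs from `g v` by a combination of the vectors `g (e j) - e j`, `j ∈ S`, since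
`g - 1` kills the other basis vectors. Hence `U` contains the range of `g - 1`, so
`g u = u + (g u - u) ∈ U` for `u ∈ U`; as `U` is finite-dimensional and `g` injective,
`g U = U`. Finally `U` already contains `e j` for `j ∈ S`, and the remaining `e i` span the rest. -/

open Submodule Set

section Finitary

variable {R V ι : Type*} [Ring R] [AddCommGroup V] [Module R V]

theorem Submodule.map_le_of_forall_sub_mem (f : V →ₗ[R] V) (U : Submodule R V)
    (hf : ∀ v, f v - v ∈ U) : U.map f ≤ U := by
  rintro _ ⟨u, hu, rfl⟩
  simpa using U.add_mem (hf u) hu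

theorem sub_mem_span_image_of_forall_notMem {e : ι → V} (he : span R (range e) = ⊤)
    (f : V →ₗ[R] V) {S : Set ι} (hf : ∀ i ∉ S, f (e i) = e i) (v : V) :
    f v - v ∈ span R ((fun i => f (e i) - e i) '' S) := by
  have hv : v ∈ span R (range e) := he ▸ mem_top
  induction hv using Submodule.span_induction with
  | mem x hx =>
    obtain ⟨i, rfl⟩ := hx
    by_cases hi : i ∈ S
    · exact subset_span ⟨i, hi, rfl⟩
    · simp [hf i hi]
  | zero => simp
  | add x y _ _ hx hy => simpa [add_sub_add_comm] using add_mem hx hy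
  | smul a x _ hx => simpa [smul_sub] using smul_mem _ a hx

theorem sup_span_image_compl_eq_top {e : ι → V} (he : span R (range e) = ⊤) (S : Set ι)
    {U : Submodule R V} (hU : e '' S ⊆ U) : U ⊔ span R (e '' Sᶜ) = ⊤ := by
  rw [eq_top_iff, ← he, ← image_union_image_compl_eq_range, span_union]
  exact sup_le_sup_right (span_le.mpr hU) _

variable {K : Type*} [Field K] [Module K V]

theorem finiteDimensional_and_map_eq_and_sup_eq_top {e : ι → V} (he : span K (range e) = ⊤)
    (g : V ≃ₗ[K] V) {S : Set ι} (hS : S.Finite) (hg : ∀ i ∉ S, g (e i) = e i) :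
    let U := span K (e '' S ∪ (fun i => g (e i)) '' S)
    FiniteDimensional K U ∧ U.map (g : V →ₗ[K] V) = U ∧ U ⊔ span K (e '' Sᶜ) = ⊤ := by
  intro U
  have heU : e '' S ⊆ U := subset_union_left.trans subset_span
  have hgeU : (fun i => g (e i)) '' S ⊆ U := subset_union_right.trans subset_span
  have hFD : FiniteDimensional K U :=
    FiniteDimensional.span_of_finite K ((hS.image _).union (hS.image _))
  have hsub : ∀ v, g v - v ∈ U := fun v =>
    span_le.mpr (by rintro _ ⟨j, hj, rfl⟩; exact sub_mem (hgeU ⟨j, hj, rfl⟩) (heU ⟨j, hj, rfl⟩))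
      (sub_mem_span_image_of_forall_notMem he g.toLinearMap hg v)
  refine ⟨hFD, ?_, sup_span_image_compl_eq_top he S heU⟩
  exact eq_of_le_of_finrank_le (U.map_le_of_forall_sub_mem _ hsub)
    (LinearEquiv.finrank_map_eq g U).ge

end Finitary

/-- Every finitary automorphism `g` of `V = ℕ →₀ ℂ` (fixing all basis vectors `e i`, `i ∉ S`,
for a finite set `S`) admits a finite-dimensional `g`-invariant subspace
`U = span ({e j | j ∈ S} ∪ {g (e j) | j ∈ S})` with `U ⊔ span {e i | i ∉ S} = ⊤`. -/
theorem stmt_0 (g : (ℕ →₀ ℂ) ≃ₗ[ℂ] (ℕ →₀ ℂ)) (S : Finset ℕ)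
    (hg : ∀ i ∉ S, g (Finsupp.single i (1 : ℂ)) = Finsupp.single i (1 : ℂ))
    (U : Submodule ℂ (ℕ →₀ ℂ))
    (hU : U = Submodule.span ℂ
      ({v | ∃ j ∈ S, v = Finsupp.single j (1 : ℂ)} ∪
       {v | ∃ j ∈ S, v = g (Finsupp.single j (1 : ℂ))})) :
    FiniteDimensional ℂ U ∧
    Submodule.map (g : (ℕ →₀ ℂ) →ₗ[ℂ] (ℕ →₀ ℂ)) U = U ∧
    U ⊔ Submodule.span ℂ {v | ∃ i ∉ S, v = Finsupp.single i (1 : ℂ)} = ⊤ := by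
  have image_eq (f : ℕ → ℕ →₀ ℂ) (p : ℕ → Prop) : {v | ∃ j, p j ∧ v = f j} = f '' {j | p j} := by
    ext; simp [eq_comm]
  rw [hU, image_eq, image_eq, image_eq]
  exact finiteDimensional_and_map_eq_and_sup_eq_top Finsupp.basisSingleOne.span_eq g
    S.finite_toSet hg
end

section
/- Let p, r : ℕ and n = 2(p + r). Let B ∈ Matrix (Fin n) (Fin n) ℂ be the block-diagonal matrix consisting of p + r copies of the 2×2 block [[0,−1],[1,0]], and let H be the diagonal matrix whose first 2p entries are 1 and whose last 2r entries are −1. If g ∈ Matrix (Fin n) (Fin n) ℂ satisfies g * B * gᵀ = B and g * H * gᴴ = H, then (B * H) * (the entrywise complex conjugate of g) = g * (B * H). -/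
/-- `Sp(p,r) = Sp(p+r;ℂ) ∩ SU(2p,2r)`: if `g` preserves the antisymmetric bilinear form with
matrix `B` (block-diagonal, `p+r` copies of `[[0,-1],[1,0]]`) and the hermitian form with
matrix `H = diag(1,…,1,−1,…,−1)` (`2p` ones, `2r` minus ones), then `B*H` intertwines the
entrywise conjugate of `g` with `g`, i.e. `g` is quaternion-linear. -/
theorem stmt_3 (p r : ℕ)
    (B H g : Matrix (Fin (2 * (p + r))) (Fin (2 * (p + r))) ℂ)
    (hB : ∀ i j : Fin (2 * (p + r)), B i j =
      if (i : ℕ) % 2 = 0 ∧ (j : ℕ) = (i : ℕ) + 1 then -1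
      else if (j : ℕ) % 2 = 0 ∧ (i : ℕ) = (j : ℕ) + 1 then 1 else 0)
    (hH : H = Matrix.diagonal
      (fun i : Fin (2 * (p + r)) => if (i : ℕ) < 2 * p then (1 : ℂ) else -1))
    (hgB : g * B * g.transpose = B)
    (hgH : g * H * g.conjTranspose = H) :
    (B * H) * g.map (starRingEnd ℂ) = g * (B * H) := by
  -- transpose of B is -B
  have hBT : B.transpose = -B := by
    ext i j
    simp only [Matrix.transpose_apply, Matrix.neg_apply, hB]
    have hij : ¬((i : ℕ) % 2 = 0 ∧ (j : ℕ) = (i : ℕ) + 1 ∧ (j : ℕ) % 2 = 0 ∧ (i : ℕ) = (j : ℕ) + 1) := by omega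
    split_ifs with h1 h2 h3 <;> first | ring1 | (exfalso; omega)
  -- transpose of H is H
  have hHT : H.transpose = H := by rw [hH, Matrix.diagonal_transpose]
  -- H * H = 1
  have hHH : H * H = 1 := by
    rw [hH, Matrix.diagonal_mul_diagonal]
    convert Matrix.diagonal_one
    split_ifs <;> ring
  -- B * B = -1
  have hBB : B * B = -1 := by
    ext i j
    rw [Matrix.mul_apply]
    have hn := i.isLt
    by_cases hi : (i : ℕ) % 2 = 0
    · have h1 : (i : ℕ) + 1 < 2 * (p + r) := by omega
      rw [Finset.sum_eq_single (⟨(i : ℕ) + 1, h1⟩ : Fin _)]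
      · rw [hB, hB]
        simp only [Matrix.neg_apply, Matrix.one_apply, Fin.ext_iff]
        norm_num
        split_ifs <;> first | ring1 | (exfalso; omega)
      · intro k _ hk
        have hkv : (k : ℕ) ≠ (i : ℕ) + 1 := fun h => hk (Fin.ext h)
        rw [hB i k]
        have hkn := k.isLt
        split_ifs with h1 h2 <;> first | (exfalso; omega) | ring1
      · intro h; exact absurd (Finset.mem_univ _) h
    · have hi1 : 1 ≤ (i : ℕ) := by omega
      have h1 : (i : ℕ) - 1 < 2 * (p + r) := by omega
      rw [Finset.sum_eq_single (⟨(i : ℕ) - 1, h1⟩ : Fin _)]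
      · rw [hB, hB]
        simp only [Matrix.neg_apply, Matrix.one_apply, Fin.val_mk, Fin.ext_iff]
        split_ifs <;> first | ring1 | (exfalso; omega)
      · intro k _ hk
        have hkv : (k : ℕ) ≠ (i : ℕ) - 1 := fun h => hk (Fin.ext h)
        rw [hB i k]
        have hkn := k.isLt
        split_ifs with h1 h2 <;> first | (exfalso; omega) | ring1
      · intro h; exact absurd (Finset.mem_univ _) h
  have hH2 : ∀ X : Matrix (Fin (2*(p+r))) (Fin (2*(p+r))) ℂ, H * (H * X) = X := by
    intro X; rw [← Matrix.mul_assoc, hHH, Matrix.one_mul]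
  have hB2 : ∀ X : Matrix (Fin (2*(p+r))) (Fin (2*(p+r))) ℂ, B * (B * X) = -X := by
    intro X; rw [← Matrix.mul_assoc, hBB, Matrix.neg_mul, Matrix.one_mul]
  -- right inverses of g
  have hginvR : g * (B * g.transpose * (-B)) = 1 := by
    simp only [← Matrix.mul_assoc]
    rw [hgB, Matrix.mul_neg, hBB, neg_neg]
  have hginvR2 : g * (H * g.conjTranspose * H) = 1 := by
    simp only [← Matrix.mul_assoc]
    rw [hgH, hHH]
  have l1 : (B * g.transpose * (-B)) * g = 1 := mul_eq_one_comm.mp hginvR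
  have key : B * g.transpose * (-B) = H * g.conjTranspose * H := by
    calc B * g.transpose * (-B)
        = (B * g.transpose * (-B)) * (g * (H * g.conjTranspose * H)) := by
          rw [hginvR2, Matrix.mul_one]
      _ = ((B * g.transpose * (-B)) * g) * (H * g.conjTranspose * H) := by
          simp only [Matrix.mul_assoc]
      _ = H * g.conjTranspose * H := by rw [l1, Matrix.one_mul]
  have hct : g.conjTranspose.transpose = g.map (starRingEnd ℂ) := by
    ext i j
    simp [Matrix.conjTranspose_apply, Matrix.map_apply]
  have key2 := congrArg Matrix.transpose key
  simp only [Matrix.transpose_mul, Matrix.transpose_neg, hBT, hHT, hct,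
    Matrix.transpose_transpose, neg_neg, Matrix.neg_mul, Matrix.mul_neg] at key2
  -- key2 should now say something like : -(B * (g * B)) = H * (g.map _ * H) or similar
  have e1 : g.map (starRingEnd ℂ) * H = H * -(B * (g * B)) := by
    conv_lhs => rw [← hH2 (g.map (starRingEnd ℂ) * H), ← key2]
  have e2 : g.map (starRingEnd ℂ) = H * -(B * (g * (B * H))) := by
    have e3 : g.map (starRingEnd ℂ) = (g.map (starRingEnd ℂ) * H) * H := by
      rw [Matrix.mul_assoc, hHH, Matrix.mul_one]
    rw [e3, e1]
    simp only [Matrix.mul_assoc, Matrix.neg_mul, Matrix.mul_neg]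
  rw [e2]
  simp only [Matrix.mul_assoc, Matrix.mul_neg]
  rw [hH2, hB2, neg_neg]
end

section
/- Let p, q : ℕ. On ℂ^p × ℂ^q define the hermitian form h((x,y),(x',y')) = ∑_i conj(x i) * x' i − ∑_j conj(y j) * y' j. For Z ∈ Matrix (Fin p) (Fin q) ℂ let W_Z = {(Z *ᵥ w, w) | w ∈ (Fin q → ℂ)}, a ℂ-subspace of ℂ^p × ℂ^q. Then h(v,v) < 0 for every nonzero v ∈ W_Z (note h(v,v) is automatically real) if and only if the matrix 1 − Zᴴ * Z is positive definite (Matrix.PosDef). -/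
open Matrix
open scoped ComplexOrder

/-! On the graph, `h((Zw, w), (Zw, w)) = ‖Zw‖² - ‖w‖² = -wᴴ(1 - ZᴴZ)w`, and `(Zw, w) = 0` only
for `w = 0`; so negativity of `h` on `W_Z` is positivity of the quadratic form of the Hermitian
matrix `1 - ZᴴZ`. -/

section
variable {m n R : Type*} [Fintype m] [Fintype n] [CommRing R] [StarRing R]

lemma star_dotProduct_conjTranspose_mul_mulVec (Z : Matrix m n R) (w : n → R) :
    star w ⬝ᵥ (Zᴴ * Z) *ᵥ w = star (Z *ᵥ w) ⬝ᵥ Z *ᵥ w := by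
  rw [← mulVec_mulVec, dotProduct_mulVec, star_mulVec]

lemma star_dotProduct_one_sub_conjTranspose_mul_mulVec [DecidableEq n] (Z : Matrix m n R)
    (w : n → R) :
    star w ⬝ᵥ (1 - Zᴴ * Z) *ᵥ w = star w ⬝ᵥ w - star (Z *ᵥ w) ⬝ᵥ Z *ᵥ w := by
  rw [sub_mulVec, dotProduct_sub, one_mulVec, star_dotProduct_conjTranspose_mul_mulVec]

end

lemma sum_conj_mul_sub_sum_conj_mul_graph {m n : Type*} [Fintype m] [Fintype n] [DecidableEq n]
    (Z : Matrix m n ℂ) (w : n → ℂ) :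
    (∑ i, starRingEnd ℂ ((Z *ᵥ w) i) * (Z *ᵥ w) i) - ∑ j, starRingEnd ℂ (w j) * w j =
      -(star w ⬝ᵥ (1 - Zᴴ * Z) *ᵥ w) := by
  rw [star_dotProduct_one_sub_conjTranspose_mul_mulVec, neg_sub]
  rfl

/-- The graph subspace `W_Z = {(Z *ᵥ w, w)}` is negative definite for the hermitian form of
signature `(p,q)` iff `1 − Zᴴ Z` is positive definite (Harish-Chandra realization of the
bounded symmetric domain of `SU(p,q)`). -/
theorem stmt_4 (p q : ℕ)
    (h : ((Fin p → ℂ) × (Fin q → ℂ)) → ((Fin p → ℂ) × (Fin q → ℂ)) → ℂ)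
    (hh : ∀ v v', h v v' =
      (∑ i, starRingEnd ℂ (v.1 i) * v'.1 i) - ∑ j, starRingEnd ℂ (v.2 j) * v'.2 j)
    (Z : Matrix (Fin p) (Fin q) ℂ) :
    (∀ v ∈ {v : (Fin p → ℂ) × (Fin q → ℂ) | ∃ w, v = (Z *ᵥ w, w)},
        v ≠ 0 → h v v < 0) ↔
    (1 - Z.conjTranspose * Z).PosDef := by
  have hM : (1 - Zᴴ * Z).IsHermitian :=
    isHermitian_one.sub (isHermitian_conjTranspose_mul_self Z)
  have h_graph (w : Fin q → ℂ) :
      h (Z *ᵥ w, w) (Z *ᵥ w, w) = -(star w ⬝ᵥ (1 - Zᴴ * Z) *ᵥ w) := by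
    rw [hh]
    exact sum_conj_mul_sub_sum_conj_mul_graph Z w
  have h_graph_ne_zero (w : Fin q → ℂ) : (Z *ᵥ w, w) ≠ 0 ↔ w ≠ 0 := by
    rw [ne_eq, ne_eq, Prod.mk_eq_zero, and_iff_right_of_imp fun hw => hw ▸ mulVec_zero Z]
  rw [posDef_iff_dotProduct_mulVec, and_iff_right hM]
  simp only [Set.mem_ofPred_eq, forall_exists_index, forall_eq_apply_imp_iff]
  refine forall_congr' fun w => ?_
  rw [h_graph, h_graph_ne_zero, Left.neg_neg_iff]
end

section
/- Let p, q : ℕ. On ℂ^p × ℂ^q define the hermitian form h((x,y),(x',y')) = ∑_i conj(x i) * x' i − ∑_j conj(y j) * y' j. Let W be a ℂ-subspace of ℂ^p × ℂ^q such that h(v,v) < 0 for every nonzero v ∈ W. Then finrank W ≤ q; moreover, if finrank W = q, then there exists a unique Z ∈ Matrix (Fin p) (Fin q) ℂ with W = {(Z *ᵥ w, w) | w ∈ (Fin q → ℂ)}, and for this Z the matrix 1 − Zᴴ * Z is positive definite. -/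
open Matrix FiniteDimensional
open scoped ComplexOrder

/-!
A negative definite subspace `W` meets `ℂ^p × 0`, on which the form is positive semidefinite,
only in `0`. Hence the projection `W → ℂ^q` is injective, which bounds the dimension, and when
`dim W = q` it is an isomorphism, so `W` is the graph of the linear map `Z` obtained by inverting
it. Evaluating the form on the graph vector `(Z w, w)` gives `‖Z w‖² - ‖w‖²`, whose negativity
for `w ≠ 0` is exactly the positive definiteness of `1 - Zᴴ Z`.
-/

namespace Submodule

variable {K E F : Type*} [Field K] [AddCommGroup E] [Module K E] [AddCommGroup F] [Module K F]
  {W : Submodule K (E × F)}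

theorem injective_snd_domRestrict (hW : Disjoint W (LinearMap.ker (LinearMap.snd K E F))) :
    Function.Injective ((LinearMap.snd K E F).domRestrict W) := by
  rw [← LinearMap.ker_eq_bot, LinearMap.ker_eq_bot']
  rintro ⟨v, hv⟩ hv2
  exact Subtype.ext (LinearMap.disjoint_ker.mp hW v hv hv2)

theorem finrank_le_of_disjoint_ker_snd [FiniteDimensional K F]
    (hW : Disjoint W (LinearMap.ker (LinearMap.snd K E F))) :
    Module.finrank K W ≤ Module.finrank K F :=
  LinearMap.finrank_le_finrank_of_injective (injective_snd_domRestrict hW)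

theorem exists_linearMap_eq_graph_of_disjoint_ker_snd [FiniteDimensional K E]
    [FiniteDimensional K F] (hW : Disjoint W (LinearMap.ker (LinearMap.snd K E F)))
    (hdim : Module.finrank K W = Module.finrank K F) :
    ∃ g : F →ₗ[K] E, (W : Set (E × F)) = {v | ∃ w, v = (g w, w)} := by
  set e := LinearMap.linearEquivOfInjective _ (injective_snd_domRestrict hW) hdim
  have he : ∀ v : W, e v = (v : E × F).2 := fun _ => rfl
  set g : F →ₗ[K] E := LinearMap.fst K E F ∘ₗ W.subtype ∘ₗ e.symm.toLinearMap
  have hsymm : ∀ w, (e.symm w : E × F) = (g w, w) := fun w =>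
    Prod.ext rfl (by rw [← he, e.apply_symm_apply])
  refine ⟨g, Set.ext fun v => ⟨fun hv => ⟨v.2, ?_⟩, ?_⟩⟩
  · rw [← hsymm, ← he ⟨v, hv⟩, e.symm_apply_apply]
  · rintro ⟨w, rfl⟩
    rw [← hsymm]
    exact (e.symm w).2

end Submodule

theorem eq_of_setOf_graph_eq {E F : Type*} {f g : F → E}
    (h : {v : E × F | ∃ w, v = (f w, w)} = {v | ∃ w, v = (g w, w)}) : f = g := by
  funext w
  obtain ⟨w', hw'⟩ : (f w, w) ∈ {v : E × F | ∃ w, v = (g w, w)} := h ▸ ⟨w, rfl⟩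
  obtain ⟨hf, rfl⟩ := Prod.ext_iff.mp hw'
  exact hf

namespace Matrix

variable {m n 𝕜 : Type*} [Fintype m] [Fintype n] [RCLike 𝕜]

theorem star_dotProduct_conjTranspose_mul_self_mulVec (A : Matrix m n 𝕜) (x : n → 𝕜) :
    star x ⬝ᵥ (Aᴴ * A) *ᵥ x = star (A *ᵥ x) ⬝ᵥ A *ᵥ x := by
  rw [← mulVec_mulVec, dotProduct_mulVec, star_mulVec]

theorem posDef_one_sub_conjTranspose_mul_self_iff [DecidableEq n] (A : Matrix m n 𝕜) :
    (1 - Aᴴ * A).PosDef ↔ ∀ x ≠ 0, star (A *ᵥ x) ⬝ᵥ A *ᵥ x < star x ⬝ᵥ x := by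
  rw [posDef_iff_dotProduct_mulVec,
    and_iff_right (isHermitian_one.sub (isHermitian_conjTranspose_mul_self A))]
  simp only [sub_mulVec, one_mulVec, dotProduct_sub, star_dotProduct_conjTranspose_mul_self_mulVec,
    sub_pos]

end Matrix

/-- A subspace `W ⊆ ℂ^p × ℂ^q` that is negative definite for the hermitian form of signature
`(p,q)` has dimension at most `q`; if its dimension equals `q` it is the graph of a unique
matrix `Z` with `1 − Zᴴ Z` positive definite. -/
theorem stmt_5 (p q : ℕ)
    (h : ((Fin p → ℂ) × (Fin q → ℂ)) → ((Fin p → ℂ) × (Fin q → ℂ)) → ℂ)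
    (hh : ∀ v v', h v v' =
      (∑ i, starRingEnd ℂ (v.1 i) * v'.1 i) - ∑ j, starRingEnd ℂ (v.2 j) * v'.2 j)
    (W : Submodule ℂ ((Fin p → ℂ) × (Fin q → ℂ)))
    (hW : ∀ v ∈ W, v ≠ 0 → h v v < 0) :
    Module.finrank ℂ W ≤ q ∧
    (Module.finrank ℂ W = q →
      ∃! Z : Matrix (Fin p) (Fin q) ℂ,
        (W : Set ((Fin p → ℂ) × (Fin q → ℂ))) = {v | ∃ w, v = (Z *ᵥ w, w)} ∧
        (1 - Z.conjTranspose * Z).PosDef) := by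
  have hform : ∀ v, h v v = star v.1 ⬝ᵥ v.1 - star v.2 ⬝ᵥ v.2 := by
    simp [hh, dotProduct]
  have hdisj : Disjoint W (LinearMap.ker (LinearMap.snd ℂ _ _)) := by
    refine LinearMap.disjoint_ker.mpr fun v hv hv2 => ?_
    by_contra hv0
    have hneg := hW v hv hv0
    have hv2 : v.2 = 0 := hv2
    rw [hform, hv2, star_zero, zero_dotProduct, sub_zero] at hneg
    exact hneg.not_ge (dotProduct_star_self_nonneg v.1)
  refine ⟨by simpa using Submodule.finrank_le_of_disjoint_ker_snd hdisj, fun hdim => ?_⟩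
  obtain ⟨g, hg⟩ :=
    Submodule.exists_linearMap_eq_graph_of_disjoint_ker_snd hdisj (by simpa using hdim)
  have hgraph : (W : Set _) = {v | ∃ w, v = (LinearMap.toMatrix' g *ᵥ w, w)} := by
    simpa [Matrix.toLin'_apply] using hg
  refine ⟨LinearMap.toMatrix' g, ⟨hgraph, ?_⟩, fun Z ⟨hZ, _⟩ => ?_⟩
  · refine (posDef_one_sub_conjTranspose_mul_self_iff _).mpr fun x hx => sub_neg.mp ?_
    rw [← hform (_, x)]
    exact hW _ (hgraph.ge ⟨x, rfl⟩) fun h0 => hx (congrArg Prod.snd h0)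
  · exact mulVec_injective (eq_of_setOf_graph_eq (hZ.symm.trans hgraph))
end

section
/- Let p, q : ℕ. On ℂ^p × ℂ^q define the hermitian form h((x,y),(x',y')) = ∑_i conj(x i) * x' i − ∑_j conj(y j) * y' j. Let A ∈ Matrix (Fin p) (Fin p) ℂ, B ∈ Matrix (Fin p) (Fin q) ℂ, C ∈ Matrix (Fin q) (Fin p) ℂ, D ∈ Matrix (Fin q) (Fin q) ℂ, and suppose the block matrix g = fromBlocks A B C D satisfies g * H * gᴴ = H, where H is the diagonal matrix with first p entries 1 and last q entries −1 (i.e. g preserves h). Let Z ∈ Matrix (Fin p) (Fin q) ℂ with 1 − Zᴴ * Z positive definite. Then C * Z + D is invertible, the image of W_Z = {(Z *ᵥ w, w)} under the map (x,y) ↦ (A *ᵥ x + B *ᵥ y, C *ᵥ x + D *ᵥ y) equals W_{Z'} for Z' = (A * Z + B) * (C * Z + D)⁻¹, and 1 − Z'ᴴ * Z' is positive definite. -/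
/-!
Write `N = A Z + B` and `M = C Z + D`, so that `g` maps `(Z w, w)` to `(N w, M w)`. Since `g`
preserves the form `‖x‖² − ‖y‖²`, evaluating it on these vectors gives
`Mᴴ M − Nᴴ N = 1 − Zᴴ Z ≫ 0`. Hence `Mᴴ M ≫ 0`, so `M` is invertible, the image of `W_Z` is
`{(N M⁻¹ u, u)}`, and `1 − Z'ᴴ Z' = (M⁻¹)ᴴ (1 − Zᴴ Z) M⁻¹ ≫ 0`.
-/

open Matrix
open scoped ComplexOrder

namespace Matrix

variable {R : Type*} {l m n : Type*} [Fintype m] [Fintype n]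

theorem conjTranspose_mul_mul_self_eq_of_mul_mul_conjTranspose_eq [CommRing R] [StarRing R]
    [DecidableEq n] {g J : Matrix n n R} (hJ : J * J = 1) (hg : g * J * gᴴ = J) :
    gᴴ * J * g = J := by
  have hleft : g * (J * gᴴ * J) = 1 := by rw [← Matrix.mul_assoc, ← Matrix.mul_assoc, hg, hJ]
  calc gᴴ * J * g = J * ((J * gᴴ * J) * g) := by simp only [← Matrix.mul_assoc, hJ, one_mul]
    _ = J := by rw [mul_eq_one_comm.mp hleft, Matrix.mul_one]

theorem conjTranspose_fromRows_mul_fromBlocks_one_neg_one_mul_fromRows [Ring R] [StarRing R]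
    [DecidableEq m] [DecidableEq n] (X : Matrix m l R) (Y : Matrix n l R) :
    (fromRows X Y)ᴴ * (fromBlocks 1 0 0 (-1) : Matrix (m ⊕ n) (m ⊕ n) R) * fromRows X Y =
      Xᴴ * X - Yᴴ * Y := by
  rw [Matrix.mul_assoc, fromBlocks_mul_fromRows, conjTranspose_fromRows_eq_fromCols_conjTranspose,
    fromCols_mul_fromRows]
  simp only [Matrix.one_mul, Matrix.zero_mul, add_zero, zero_add, Matrix.neg_mul, Matrix.mul_neg,
    sub_eq_add_neg]

theorem conjTranspose_mul_self_sub_eq_of_fromBlocks_isometry [CommRing R] [StarRing R]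
    [DecidableEq m] [DecidableEq n]
    {A : Matrix m m R} {B : Matrix m n R} {C : Matrix n m R} {D : Matrix n n R}
    (hg : fromBlocks A B C D * fromBlocks 1 0 0 (-1) * (fromBlocks A B C D)ᴴ =
      fromBlocks 1 0 0 (-1))
    (Z : Matrix m n R) :
    (C * Z + D)ᴴ * (C * Z + D) - (A * Z + B)ᴴ * (A * Z + B) = 1 - Zᴴ * Z := by
  have hJ : (fromBlocks 1 0 0 (-1) : Matrix (m ⊕ n) (m ⊕ n) R) * fromBlocks 1 0 0 (-1) = 1 := by
    simp [fromBlocks_multiply, ← fromBlocks_one]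
  have hg' := conjTranspose_mul_mul_self_eq_of_mul_mul_conjTranspose_eq hJ hg
  have himage : fromBlocks A B C D * fromRows Z (1 : Matrix n n R) =
      fromRows (A * Z + B) (C * Z + D) := by
    simp [fromBlocks_mul_fromRows]
  set g := fromBlocks A B C D
  set J : Matrix (m ⊕ n) (m ⊕ n) R := fromBlocks 1 0 0 (-1)
  set V := fromRows Z (1 : Matrix n n R)
  have hquad : (A * Z + B)ᴴ * (A * Z + B) - (C * Z + D)ᴴ * (C * Z + D) = Zᴴ * Z - 1ᴴ * 1 :=
    calc _ = (g * V)ᴴ * J * (g * V) := by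
          rw [himage, conjTranspose_fromRows_mul_fromBlocks_one_neg_one_mul_fromRows]
      _ = Vᴴ * (gᴴ * J * g) * V := by simp only [conjTranspose_mul, Matrix.mul_assoc]
      _ = _ := by rw [hg', conjTranspose_fromRows_mul_fromBlocks_one_neg_one_mul_fromRows]
  rw [← neg_sub, hquad, conjTranspose_one, Matrix.mul_one, neg_sub]

theorem isUnit_of_posDef_conjTranspose_mul_self_sub [Field R] [PartialOrder R] [StarRing R]
    [StarOrderedRing R] [DecidableEq n] {M : Matrix n n R} {N : Matrix m n R}
    (hP : (Mᴴ * M - Nᴴ * N).PosDef) : IsUnit M := by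
  have hMM : (Mᴴ * M).PosDef := by
    simpa using hP.add_posSemidef (posSemidef_conjTranspose_mul_self N)
  exact isUnit_of_mul_isUnit_right hMM.isUnit

theorem posDef_one_sub_conjTranspose_mul_self_of_mul_inv [Field R] [PartialOrder R] [StarRing R]
    [StarOrderedRing R] [DecidableEq n] {M : Matrix n n R} {N : Matrix m n R}
    (hP : (Mᴴ * M - Nᴴ * N).PosDef) : (1 - (N * M⁻¹)ᴴ * (N * M⁻¹)).PosDef := by
  have hM := isUnit_of_posDef_conjTranspose_mul_self_sub hP
  have hMinv : M * M⁻¹ = 1 := mul_nonsing_inv M ((isUnit_iff_isUnit_det M).mp hM)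
  have hinj : Function.Injective (M⁻¹).mulVec :=
    mulVec_injective_iff_isUnit.mpr (isUnit_nonsing_inv_iff.mpr hM)
  convert hP.conjTranspose_mul_mul_same hinj using 1
  have hMinvH : (M⁻¹)ᴴ * Mᴴ = 1 := by rw [← conjTranspose_mul, hMinv, conjTranspose_one]
  simp only [Matrix.mul_sub, Matrix.sub_mul, conjTranspose_mul, Matrix.mul_assoc]
  rw [hMinv, Matrix.mul_one, hMinvH]

theorem image_graph_fromBlocks_mulVec [CommRing R] [DecidableEq n]
    {A : Matrix m m R} {B : Matrix m n R} {C : Matrix n m R} {D : Matrix n n R}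
    {Z : Matrix m n R} (hM : IsUnit (C * Z + D)) :
    (fun v : (m → R) × (n → R) => (A *ᵥ v.1 + B *ᵥ v.2, C *ᵥ v.1 + D *ᵥ v.2)) ''
        {v | ∃ w, v = (Z *ᵥ w, w)} =
      {v | ∃ w, v = (((A * Z + B) * (C * Z + D)⁻¹) *ᵥ w, w)} := by
  set M := C * Z + D
  have hdet := (isUnit_iff_isUnit_det M).mp hM
  have hblock : ∀ w, (A *ᵥ (Z *ᵥ w) + B *ᵥ w, C *ᵥ (Z *ᵥ w) + D *ᵥ w) =
      ((A * Z + B) *ᵥ w, M *ᵥ w) := fun w => by simp only [M, add_mulVec, mulVec_mulVec]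
  ext v
  constructor
  · rintro ⟨_, ⟨w, rfl⟩, rfl⟩
    refine ⟨M *ᵥ w, ?_⟩
    refine (hblock w).trans ?_
    rw [mulVec_mulVec, Matrix.mul_assoc, nonsing_inv_mul M hdet, Matrix.mul_one]
  · rintro ⟨u, rfl⟩
    refine ⟨_, ⟨M⁻¹ *ᵥ u, rfl⟩, ?_⟩
    refine (hblock _).trans ?_
    rw [mulVec_mulVec, mulVec_mulVec, mul_nonsing_inv M hdet, one_mulVec]

end Matrix

theorem stmt_6_general (p q : ℕ)
    (A : Matrix (Fin p) (Fin p) ℂ) (B : Matrix (Fin p) (Fin q) ℂ)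
    (C : Matrix (Fin q) (Fin p) ℂ) (D : Matrix (Fin q) (Fin q) ℂ)
    (H : Matrix (Fin p ⊕ Fin q) (Fin p ⊕ Fin q) ℂ)
    (hH : H = Matrix.fromBlocks 1 0 0 (-1))
    (hg : Matrix.fromBlocks A B C D * H * (Matrix.fromBlocks A B C D).conjTranspose = H)
    (Z : Matrix (Fin p) (Fin q) ℂ)
    (hZ : (1 - Z.conjTranspose * Z).PosDef) :
    IsUnit (C * Z + D) ∧
    (fun v : (Fin p → ℂ) × (Fin q → ℂ) =>
        (A *ᵥ v.1 + B *ᵥ v.2, C *ᵥ v.1 + D *ᵥ v.2)) ''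
      {v | ∃ w, v = (Z *ᵥ w, w)} =
      {v | ∃ w, v = (((A * Z + B) * (C * Z + D)⁻¹) *ᵥ w, w)} ∧
    (1 - ((A * Z + B) * (C * Z + D)⁻¹).conjTranspose *
        ((A * Z + B) * (C * Z + D)⁻¹)).PosDef := by
  subst hH
  have hP : ((C * Z + D)ᴴ * (C * Z + D) - (A * Z + B)ᴴ * (A * Z + B)).PosDef := by
    rwa [conjTranspose_mul_self_sub_eq_of_fromBlocks_isometry hg Z]
  have hM := isUnit_of_posDef_conjTranspose_mul_self_sub hP
  exact ⟨hM, image_graph_fromBlocks_mulVec hM, posDef_one_sub_conjTranspose_mul_self_of_mul_inv hP⟩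

/-- Linear fractional action of `U(p,q)` on the bounded symmetric domain
`{Z | 1 − Zᴴ Z ≫ 0}`: if `g = [[A,B],[C,D]]` preserves the hermitian form of signature
`(p,q)` and `1 − Zᴴ Z` is positive definite, then `C Z + D` is invertible, `g` maps the
graph `W_Z` to `W_{Z'}` with `Z' = (A Z + B)(C Z + D)⁻¹`, and `1 − Z'ᴴ Z'` is positive
definite. -/
theorem stmt_6 (p q : ℕ)
    (h : ((Fin p → ℂ) × (Fin q → ℂ)) → ((Fin p → ℂ) × (Fin q → ℂ)) → ℂ)
    (hh : ∀ v v', h v v' =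
      (∑ i, starRingEnd ℂ (v.1 i) * v'.1 i) - ∑ j, starRingEnd ℂ (v.2 j) * v'.2 j)
    (A : Matrix (Fin p) (Fin p) ℂ) (B : Matrix (Fin p) (Fin q) ℂ)
    (C : Matrix (Fin q) (Fin p) ℂ) (D : Matrix (Fin q) (Fin q) ℂ)
    (H : Matrix (Fin p ⊕ Fin q) (Fin p ⊕ Fin q) ℂ)
    (hH : H = Matrix.fromBlocks 1 0 0 (-1))
    (hg : Matrix.fromBlocks A B C D * H * (Matrix.fromBlocks A B C D).conjTranspose = H)
    (Z : Matrix (Fin p) (Fin q) ℂ)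
    (hZ : (1 - Z.conjTranspose * Z).PosDef) :
    IsUnit (C * Z + D) ∧
    (fun v : (Fin p → ℂ) × (Fin q → ℂ) =>
        (A *ᵥ v.1 + B *ᵥ v.2, C *ᵥ v.1 + D *ᵥ v.2)) ''
      {v | ∃ w, v = (Z *ᵥ w, w)} =
      {v | ∃ w, v = (((A * Z + B) * (C * Z + D)⁻¹) *ᵥ w, w)} ∧
    (1 - ((A * Z + B) * (C * Z + D)⁻¹).conjTranspose *
        ((A * Z + B) * (C * Z + D)⁻¹)).PosDef :=
  stmt_6_general p q A B C D H hH hg Z hZ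
end

section
/- Let n : ℕ. On ℂⁿ × ℂⁿ define the symmetric bilinear form β((x,y),(x',y')) = ∑_i (x i * y' i + y i * x' i) and the hermitian form h((x,y),(x',y')) = ∑_i conj(x i) * x' i − ∑_i conj(y i) * y' i. For Z ∈ Matrix (Fin n) (Fin n) ℂ let W_Z = {(Z *ᵥ w, w) | w ∈ (Fin n → ℂ)}. Then: (a) β vanishes identically on W_Z × W_Z if and only if Z is antisymmetric (Zᵀ = −Z); (b) W_Z is β-isotropic and satisfies h(v,v) < 0 for every nonzero v ∈ W_Z if and only if Zᵀ = −Z and 1 − Zᴴ * Z is positive definite. -/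
/-! On the graph `W_Z`, `β` becomes the bilinear form of `Zᵀ + Z`, and `h(v, v)` becomes
`|Z w|² - |w|²`. So isotropy means `Zᵀ + Z = 0`, and negativity means that `Z` is a strict
contraction, i.e. `1 - Zᴴ Z ≻ 0`. -/

open Matrix
open scoped ComplexOrder

namespace Matrix

variable {ι R : Type*} [Fintype ι]

theorem eq_zero_iff_forall_mulVec_dotProduct_eq_zero [DecidableEq ι] [CommSemiring R]
    {A : Matrix ι ι R} :
    A = 0 ↔ ∀ w w' : ι → R, (A *ᵥ w) ⬝ᵥ w' = 0 := by
  refine ⟨fun hA w w' => by simp [hA], fun H => ?_⟩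
  ext i j
  simpa [mulVec_single_one, dotProduct_single_one] using H (Pi.single j 1) (Pi.single i 1)

theorem mulVec_dotProduct_add_dotProduct_mulVec [CommSemiring R] (Z : Matrix ι ι R)
    (w w' : ι → R) :
    (Z *ᵥ w) ⬝ᵥ w' + w ⬝ᵥ (Z *ᵥ w') = ((Zᵀ + Z) *ᵥ w) ⬝ᵥ w' := by
  rw [add_mulVec, add_dotProduct, add_comm, mulVec_transpose, ← dotProduct_mulVec]

theorem posDef_one_sub_conjTranspose_mul_self_iff_s8 [DecidableEq ι] [CommRing R] [PartialOrder R]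
    [IsOrderedAddMonoid R] [StarRing R] (Z : Matrix ι ι R) :
    (1 - Zᴴ * Z).PosDef ↔
      ∀ ⦃w : ι → R⦄, w ≠ 0 → star (Z *ᵥ w) ⬝ᵥ (Z *ᵥ w) < star w ⬝ᵥ w := by
  have hquad (w : ι → R) :
      star w ⬝ᵥ ((1 - Zᴴ * Z) *ᵥ w) = star w ⬝ᵥ w - star (Z *ᵥ w) ⬝ᵥ (Z *ᵥ w) := by
    rw [sub_mulVec, dotProduct_sub, one_mulVec, ← mulVec_mulVec, dotProduct_mulVec (star w) Zᴴ,
      ← star_mulVec]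
  have hherm : (1 - Zᴴ * Z).IsHermitian :=
    isHermitian_one.sub (isHermitian_conjTranspose_mul_self Z)
  simp only [posDef_iff_dotProduct_mulVec, hherm, true_and, hquad, sub_pos]

end Matrix

/-- Bounded symmetric domain of `SO*(2n)` inside the `SU(n,n)` domain: the graph `W_Z` is
isotropic for the symmetric form `β` iff `Z` is antisymmetric, and is `β`-isotropic and
`h`-negative definite iff `Zᵀ = −Z` and `1 − Zᴴ Z` is positive definite. -/
theorem stmt_8 (n : ℕ)
    (β h : ((Fin n → ℂ) × (Fin n → ℂ)) → ((Fin n → ℂ) × (Fin n → ℂ)) → ℂ)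
    (hβ : ∀ v v', β v v' = ∑ i, (v.1 i * v'.2 i + v.2 i * v'.1 i))
    (hh : ∀ v v', h v v' =
      (∑ i, starRingEnd ℂ (v.1 i) * v'.1 i) - ∑ i, starRingEnd ℂ (v.2 i) * v'.2 i)
    (Z : Matrix (Fin n) (Fin n) ℂ) :
    ((∀ v ∈ {v : (Fin n → ℂ) × (Fin n → ℂ) | ∃ w, v = (Z *ᵥ w, w)},
        ∀ v' ∈ {v : (Fin n → ℂ) × (Fin n → ℂ) | ∃ w, v = (Z *ᵥ w, w)},
        β v v' = 0) ↔ Z.transpose = -Z) ∧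
    (((∀ v ∈ {v : (Fin n → ℂ) × (Fin n → ℂ) | ∃ w, v = (Z *ᵥ w, w)},
        ∀ v' ∈ {v : (Fin n → ℂ) × (Fin n → ℂ) | ∃ w, v = (Z *ᵥ w, w)},
        β v v' = 0) ∧
      (∀ v ∈ {v : (Fin n → ℂ) × (Fin n → ℂ) | ∃ w, v = (Z *ᵥ w, w)},
        v ≠ 0 → h v v < 0)) ↔
      (Z.transpose = -Z ∧ (1 - Z.conjTranspose * Z).PosDef)) := by
  have hβ_graph (w w' : Fin n → ℂ) :
      β (Z *ᵥ w, w) (Z *ᵥ w', w') = ((Zᵀ + Z) *ᵥ w) ⬝ᵥ w' := by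
    rw [hβ, Finset.sum_add_distrib]
    exact mulVec_dotProduct_add_dotProduct_mulVec Z w w'
  have hh_graph (w : Fin n → ℂ) :
      h (Z *ᵥ w, w) (Z *ᵥ w, w) = star (Z *ᵥ w) ⬝ᵥ (Z *ᵥ w) - star w ⬝ᵥ w :=
    hh _ _
  have isotropic : (∀ v ∈ {v : (Fin n → ℂ) × (Fin n → ℂ) | ∃ w, v = (Z *ᵥ w, w)},
      ∀ v' ∈ {v : (Fin n → ℂ) × (Fin n → ℂ) | ∃ w, v = (Z *ᵥ w, w)},
      β v v' = 0) ↔ Zᵀ = -Z := by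
    rw [eq_neg_iff_add_eq_zero, eq_zero_iff_forall_mulVec_dotProduct_eq_zero]
    simp only [Set.mem_ofPred_eq, forall_exists_index, forall_eq_apply_imp_iff, hβ_graph]
  have negative : (∀ v ∈ {v : (Fin n → ℂ) × (Fin n → ℂ) | ∃ w, v = (Z *ᵥ w, w)},
      v ≠ 0 → h v v < 0) ↔ (1 - Zᴴ * Z).PosDef := by
    rw [posDef_one_sub_conjTranspose_mul_self_iff_s8]
    have graph_ne_zero (w : Fin n → ℂ) : (Z *ᵥ w, w) ≠ 0 ↔ w ≠ 0 :=
      ⟨fun hv hw => hv (by simp [hw]), fun hw hv => hw (congrArg Prod.snd hv)⟩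
    simp only [Set.mem_ofPred_eq, forall_exists_index, forall_eq_apply_imp_iff, graph_ne_zero,
      hh_graph, sub_neg]
  exact ⟨isotropic, and_congr isotropic negative⟩
end

section
/- Let n : ℕ. For Z ∈ (Fin n → ℂ) set q(Z) = ∑_i (Z i)² and ξ(Z) = (fun i => 2 * Complex.I * Z i, 1 + q(Z), Complex.I * (1 − q(Z))) ∈ (Fin n → ℂ) × ℂ × ℂ. Define b(v) = ∑_{i} (v₁ i)² + v₂² + v₃² for v = (v₁,v₂,v₃), and h(v) = ∑_i ‖v₁ i‖² − ‖v₂‖² − ‖v₃‖². Then for every Z: (a) b(ξ(Z)) = 0; (b) h(ξ(Z)) = 4 * ∑_i ‖Z i‖² − 2 − 2 * ‖q(Z)‖²; in particular h(ξ(Z)) < 0 if and only if 1 + ‖q(Z)‖² − 2 * ∑_i ‖Z i‖² > 0. -/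
open Complex

theorem Finset.sum_mul_sq {ι R : Type*} [CommSemiring R] (s : Finset ι) (c : R) (f : ι → R) :
    ∑ i ∈ s, (c * f i) ^ 2 = c ^ 2 * ∑ i ∈ s, f i ^ 2 := by
  simp only [mul_pow, Finset.mul_sum]

theorem Finset.sum_norm_mul_sq {ι K : Type*} [NormedDivisionRing K] (s : Finset ι) (c : K)
    (f : ι → K) : ∑ i ∈ s, ‖c * f i‖ ^ 2 = ‖c‖ ^ 2 * ∑ i ∈ s, ‖f i‖ ^ 2 := by
  simp only [norm_mul, mul_pow, Finset.mul_sum]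

theorem Complex.one_add_sq_add_I_mul_one_sub_sq (w : ℂ) :
    (1 + w) ^ 2 + (I * (1 - w)) ^ 2 = 4 * w := by
  linear_combination (1 - w) ^ 2 * I_sq

theorem Complex.norm_one_add_sq_add_norm_I_mul_one_sub_sq (w : ℂ) :
    ‖1 + w‖ ^ 2 + ‖I * (1 - w)‖ ^ 2 = 2 + 2 * ‖w‖ ^ 2 := by
  rw [norm_mul, norm_I, one_mul, parallelogram_law_with_norm ℝ, norm_one]
  ring

/-- Harish-Chandra embedding `ξ` of `ℂⁿ` into the quadric for `SO(n,2)`: `ξ(Z)` is `b`-null,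
and `h(ξ(Z)) = 4∑‖Zᵢ‖² − 2 − 2‖q(Z)‖²`, so `h(ξ(Z)) < 0 ↔ 1 + ‖q(Z)‖² − 2∑‖Zᵢ‖² > 0`. -/
theorem stmt_9 (n : ℕ)
    (q : (Fin n → ℂ) → ℂ) (hq : ∀ Z, q Z = ∑ i, (Z i) ^ 2)
    (ξ : (Fin n → ℂ) → (Fin n → ℂ) × ℂ × ℂ)
    (hξ : ∀ Z, ξ Z = (fun i => 2 * Complex.I * Z i, 1 + q Z, Complex.I * (1 - q Z)))
    (b : (Fin n → ℂ) × ℂ × ℂ → ℂ)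
    (hb : ∀ v, b v = (∑ i, (v.1 i) ^ 2) + v.2.1 ^ 2 + v.2.2 ^ 2)
    (h : (Fin n → ℂ) × ℂ × ℂ → ℝ)
    (hh : ∀ v, h v = (∑ i, ‖v.1 i‖ ^ 2) - ‖v.2.1‖ ^ 2 - ‖v.2.2‖ ^ 2)
    (Z : Fin n → ℂ) :
    b (ξ Z) = 0 ∧
    h (ξ Z) = 4 * (∑ i, ‖Z i‖ ^ 2) - 2 - 2 * ‖q Z‖ ^ 2 ∧
    (h (ξ Z) < 0 ↔ 1 + ‖q Z‖ ^ 2 - 2 * ∑ i, ‖Z i‖ ^ 2 > 0) := by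
  have hb_null : b (ξ Z) = 0 := by
    rw [hb, hξ, Finset.sum_mul_sq, ← hq, add_assoc, one_add_sq_add_I_mul_one_sub_sq]
    linear_combination 4 * q Z * I_sq
  have hh_eq : h (ξ Z) = 4 * (∑ i, ‖Z i‖ ^ 2) - 2 - 2 * ‖q Z‖ ^ 2 := by
    have := norm_one_add_sq_add_norm_I_mul_one_sub_sq (q Z)
    rw [hh, hξ, Finset.sum_norm_mul_sq, norm_mul, norm_I, mul_one, Complex.norm_ofNat]
    linear_combination -this
  refine ⟨hb_null, hh_eq, ?_⟩
  rw [hh_eq]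
  constructor <;> intro <;> linarith
end

section
/- Let n : ℕ and Z ∈ (Fin n → ℂ). Set s = ∑_i ‖Z i‖² and t = ‖∑_i (Z i)²‖ (complex absolute value). Then: (a) t ≤ s; (b) if 1 + t² − 2s > 0 then s ≠ 1; (c) (1 + t² − 2s > 0 ∧ s < 1) ↔ 1 − s > Real.sqrt (s² − t²); (d) (1 + t² − 2s > 0 ∧ s > 1) ↔ s − 1 > Real.sqrt (s² − t²). -/
/-- For `Z ∈ ℂⁿ`, with `s = ∑‖Zᵢ‖²` and `t = ‖∑ Zᵢ²‖`: `t ≤ s`; if `1 + t² − 2s > 0` then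
`s ≠ 1`; and the locus `1 + t² − 2s > 0` splits into the bounded piece (`s < 1`),
characterized by `1 − s > √(s² − t²)`, and the unbounded piece (`s > 1`), characterized by
`s − 1 > √(s² − t²)`. -/
theorem stmt_10 (n : ℕ) (Z : Fin n → ℂ) (s t : ℝ)
    (hs : s = ∑ i, ‖Z i‖ ^ 2) (ht : t = ‖∑ i, (Z i) ^ 2‖) :
    t ≤ s ∧
    (1 + t ^ 2 - 2 * s > 0 → s ≠ 1) ∧
    ((1 + t ^ 2 - 2 * s > 0 ∧ s < 1) ↔ 1 - s > Real.sqrt (s ^ 2 - t ^ 2)) ∧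
    ((1 + t ^ 2 - 2 * s > 0 ∧ s > 1) ↔ s - 1 > Real.sqrt (s ^ 2 - t ^ 2)) := by
  have hts : t ≤ s := by
    rw [hs, ht]
    calc ‖∑ i, (Z i) ^ 2‖ ≤ ∑ i, ‖(Z i) ^ 2‖ := norm_sum_le _ _
      _ = ∑ i, ‖Z i‖ ^ 2 := by simp [norm_pow]
  have ht0 : 0 ≤ t := ht ▸ norm_nonneg _
  have hst : 0 ≤ s ^ 2 - t ^ 2 := by nlinarith
  have hsq := Real.sq_sqrt hst
  have hnn := Real.sqrt_nonneg (s ^ 2 - t ^ 2)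
  refine ⟨hts, ?_, ?_, ?_⟩
  · intro h hs1
    rw [hs1] at h
    nlinarith
  · constructor
    · rintro ⟨h, h1⟩
      rw [gt_iff_lt, Real.sqrt_lt' (by linarith)]
      nlinarith
    · intro h
      have h0 : 0 < 1 - s := lt_of_le_of_lt hnn h
      have h2 : s ^ 2 - t ^ 2 < (1 - s) ^ 2 := by nlinarith
      exact ⟨by nlinarith, by linarith⟩
  · constructor
    · rintro ⟨h, h1⟩
      rw [gt_iff_lt, Real.sqrt_lt' (by linarith)]
      nlinarith
    · intro h
      have h0 : 0 < s - 1 := lt_of_le_of_lt hnn h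
      have h2 : s ^ 2 - t ^ 2 < (s - 1) ^ 2 := by nlinarith
      exact ⟨by nlinarith, by linarith⟩
end

section
/- Let n : ℕ and v = (v₁, v₂, v₃) ∈ (Fin n → ℂ) × ℂ × ℂ with ∑_i (v₁ i)² + v₂² + v₃² = 0. Suppose λ := (v₂ − Complex.I * v₃) / 2 ≠ 0. Define Z ∈ (Fin n → ℂ) by Z i = v₁ i / (2 * Complex.I * λ). Then v = λ • ξ(Z), i.e. v₁ i = λ * (2 * Complex.I * Z i) for all i, v₂ = λ * (1 + q(Z)), and v₃ = λ * (Complex.I * (1 − q(Z))), where q(Z) = ∑_i (Z i)² and ξ(Z) = (fun i => 2 * Complex.I * Z i, 1 + q(Z), Complex.I * (1 − q(Z))). -/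
/-!
Write `λ = (v₂ - i v₃)/2`. The quadratic form factors as `v₂² + v₃² = (v₂ - i v₃)(v₂ + i v₃)`,
so on the null cone `∑ v₁² = -2λ (v₂ + i v₃)`, and hence `q(Z) = -∑ v₁² / (4λ²)` satisfies
`2λ q(Z) = v₂ + i v₃`. Adding and subtracting this from `2λ = v₂ - i v₃` recovers `v₂` and `v₃`.
-/

open Complex

lemma sq_add_sq_eq_sub_I_mul_mul_add_I_mul (a b : ℂ) :
    a ^ 2 + b ^ 2 = (a - I * b) * (a + I * b) := by
  linear_combination b ^ 2 * I_sq

lemma two_mul_mul_sum_sq_div_of_null {ι : Type*} [Fintype ι] (v : ι → ℂ) (a b l : ℂ)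
    (hnull : (∑ i, v i ^ 2) + a ^ 2 + b ^ 2 = 0) (hl : l = (a - I * b) / 2) (hl0 : l ≠ 0) :
    2 * l * ∑ i, (v i / (2 * I * l)) ^ 2 = a + I * b := by
  have hsum : ∑ i, v i ^ 2 = -(2 * l) * (a + I * b) := by
    rw [hl]
    linear_combination hnull - sq_add_sq_eq_sub_I_mul_mul_add_I_mul a b
  simp_rw [div_pow, ← Finset.sum_div, hsum]
  field_simp
  linear_combination (-(a + I * b)) * I_sq

/-- Every `b`-null vector `v = (v₁,v₂,v₃)` with `λ = (v₂ − i v₃)/2 ≠ 0` is the scalar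
multiple `λ • ξ(Z)` of a point in the image of the Harish-Chandra embedding `ξ`, where
`Z i = v₁ i / (2 i λ)`. -/
theorem stmt_11 (n : ℕ) (v₁ : Fin n → ℂ) (v₂ v₃ : ℂ)
    (hnull : (∑ i, (v₁ i) ^ 2) + v₂ ^ 2 + v₃ ^ 2 = 0)
    (l : ℂ) (hl : l = (v₂ - Complex.I * v₃) / 2) (hl0 : l ≠ 0)
    (Z : Fin n → ℂ) (hZ : ∀ i, Z i = v₁ i / (2 * Complex.I * l))
    (q : ℂ) (hq : q = ∑ i, (Z i) ^ 2) :
    (∀ i, v₁ i = l * (2 * Complex.I * Z i)) ∧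
    v₂ = l * (1 + q) ∧
    v₃ = l * (Complex.I * (1 - q)) := by
  have hlq : 2 * l * q = v₂ + I * v₃ := by
    rw [hq, Finset.sum_congr rfl fun i _ => by rw [hZ i]]
    exact two_mul_mul_sum_sq_div_of_null v₁ v₂ v₃ l hnull hl hl0
  refine ⟨fun i => ?_, ?_, ?_⟩
  · rw [hZ i]
    field_simp
  · linear_combination -hl - hlq / 2
  · linear_combination -I * hl + I * hlq / 2 + v₃ * I_sq
end

section
/- Let p, q : ℕ. On ℝ^p × ℝ^q define the symmetric bilinear form b((x,y),(x',y')) = ∑_i x i * x' i − ∑_j y j * y' j. For X ∈ Matrix (Fin p) (Fin q) ℝ let W_X = {(X *ᵥ w, w) | w ∈ (Fin q → ℝ)}, an ℝ-subspace of ℝ^p × ℝ^q. Then: (a) b(v,v) < 0 for every nonzero v ∈ W_X if and only if 1 − Xᵀ * X is positive definite; (b) any ℝ-subspace W of ℝ^p × ℝ^q with b(v,v) < 0 for all nonzero v ∈ W has finrank W ≤ q, and if finrank W = q then there is a unique X with W = W_X. -/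
/-!
On the graph of `X` the form takes the value `b (X w, w) (X w, w) = -(wᵀ (1 - Xᵀ X) w)`, which
gives (a). A `b`-negative definite subspace `W` meets `ℝ^p × 0`, where `b` is positive, only in
`0`, so the projection `W → ℝ^q` is injective. When `dim W = q` it is an isomorphism, and `W` is
the graph of its inverse followed by the first projection; a graph determines its matrix.
-/

open Matrix

lemma Submodule.exists_eq_range_prod_id {R M N : Type*} [Semiring R] [AddCommMonoid M]
    [AddCommMonoid N] [Module R M] [Module R N] {W : Submodule R (M × N)}
    (hW : Function.Bijective (LinearMap.snd R M N ∘ₗ W.subtype)) :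
    ∃ g : N →ₗ[R] M, W = LinearMap.range (g.prod LinearMap.id) := by
  let e := LinearEquiv.ofBijective _ hW
  refine ⟨LinearMap.fst R M N ∘ₗ W.subtype ∘ₗ e.symm.toLinearMap, ?_⟩
  have hgraph : W.subtype ∘ₗ e.symm.toLinearMap =
      (LinearMap.fst R M N ∘ₗ W.subtype ∘ₗ e.symm.toLinearMap).prod LinearMap.id := by
    ext w
    · rfl
    · exact e.apply_symm_apply w
  rw [← hgraph, LinearMap.range_comp_of_range_eq_top _ e.symm.range, Submodule.range_subtype]

variable {m n : Type*} [Fintype n]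

lemma dotProduct_one_sub_transpose_mul_self_mulVec [Fintype m] [DecidableEq n]
    (X : Matrix m n ℝ) (w : n → ℝ) :
    w ⬝ᵥ ((1 - Xᵀ * X) *ᵥ w) = w ⬝ᵥ w - X *ᵥ w ⬝ᵥ X *ᵥ w := by
  rw [sub_mulVec, one_mulVec, dotProduct_sub, ← mulVec_mulVec, dotProduct_mulVec,
    vecMul_transpose]

lemma posDef_one_sub_transpose_mul_self_iff [Fintype m] [DecidableEq n] (X : Matrix m n ℝ) :
    (1 - Xᵀ * X).PosDef ↔ ∀ w ≠ 0, X *ᵥ w ⬝ᵥ X *ᵥ w < w ⬝ᵥ w := by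
  have hherm : (1 - Xᵀ * X).IsHermitian :=
    isHermitian_one.sub (by simpa using isHermitian_conjTranspose_mul_self X)
  simp only [posDef_iff_dotProduct_mulVec, hherm, true_and, star_trivial,
    dotProduct_one_sub_transpose_mul_self_mulVec, sub_pos]

lemma forall_mem_graph_ne_zero_iff (X : Matrix m n ℝ) (P : (m → ℝ) × (n → ℝ) → Prop) :
    (∀ v ∈ {v : (m → ℝ) × (n → ℝ) | ∃ w, v = (X *ᵥ w, w)}, v ≠ 0 → P v) ↔
      ∀ w ≠ 0, P (X *ᵥ w, w) := by
  refine ⟨fun h w hw => h _ ⟨w, rfl⟩ fun h0 => hw (congrArg Prod.snd h0), ?_⟩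
  rintro h _ ⟨w, rfl⟩ hne
  exact h w fun hw => hne (by simp [hw])

lemma eq_of_graph_eq {Y Z : Matrix m n ℝ}
    (h : {v : (m → ℝ) × (n → ℝ) | ∃ w, v = (Y *ᵥ w, w)} = {v | ∃ w, v = (Z *ᵥ w, w)}) :
    Y = Z := by
  refine ext_iff_mulVec.2 fun w => ?_
  obtain ⟨w', hw'⟩ : (Y *ᵥ w, w) ∈ {v : (m → ℝ) × (n → ℝ) | ∃ w, v = (Z *ᵥ w, w)} :=
    h ▸ ⟨w, rfl⟩
  obtain ⟨hY, rfl⟩ := Prod.ext_iff.1 hw'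
  exact hY

lemma injective_snd_comp_subtype_of_negDef [Fintype m] {W : Submodule ℝ ((m → ℝ) × (n → ℝ))}
    (hW : ∀ v ∈ W, v ≠ 0 → v.1 ⬝ᵥ v.1 < v.2 ⬝ᵥ v.2) :
    Function.Injective (LinearMap.snd ℝ (m → ℝ) (n → ℝ) ∘ₗ W.subtype) := by
  refine (injective_iff_map_eq_zero _).2 fun v hv => ?_
  by_contra hne
  have hneg := hW v v.2 (by simpa using hne)
  rw [show (v : (m → ℝ) × (n → ℝ)).2 = 0 from hv, dotProduct_zero] at hneg
  exact hneg.not_ge (by simpa using dotProduct_self_star_nonneg (v : (m → ℝ) × (n → ℝ)).1)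

lemma exists_matrix_eq_graph_of_bijective [DecidableEq n] {W : Submodule ℝ ((m → ℝ) × (n → ℝ))}
    (hW : Function.Bijective (LinearMap.snd ℝ (m → ℝ) (n → ℝ) ∘ₗ W.subtype)) :
    ∃ X : Matrix m n ℝ, (W : Set ((m → ℝ) × (n → ℝ))) = {v | ∃ w, v = (X *ᵥ w, w)} := by
  obtain ⟨g, rfl⟩ := Submodule.exists_eq_range_prod_id hW
  refine ⟨LinearMap.toMatrix' g, ?_⟩
  ext v
  simp [eq_comm]

/-- Real bounded symmetric domain of `SO(p,q)`: a graph `W_X = {(X *ᵥ w, w)}` is negative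
definite for the form `b` of signature `(p,q)` iff `1 − Xᵀ X` is positive definite, and any
`b`-negative definite subspace has dimension at most `q`, being the graph of a unique `X`
when the dimension equals `q`. -/
theorem stmt_15 (p q : ℕ)
    (b : ((Fin p → ℝ) × (Fin q → ℝ)) → ((Fin p → ℝ) × (Fin q → ℝ)) → ℝ)
    (hb : ∀ v v', b v v' = (∑ i, v.1 i * v'.1 i) - ∑ j, v.2 j * v'.2 j) :
    (∀ X : Matrix (Fin p) (Fin q) ℝ,
      (∀ v ∈ {v : (Fin p → ℝ) × (Fin q → ℝ) | ∃ w, v = (X *ᵥ w, w)},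
          v ≠ 0 → b v v < 0) ↔ (1 - X.transpose * X).PosDef) ∧
    (∀ W : Submodule ℝ ((Fin p → ℝ) × (Fin q → ℝ)),
      (∀ v ∈ W, v ≠ 0 → b v v < 0) →
        Module.finrank ℝ W ≤ q ∧
        (Module.finrank ℝ W = q →
          ∃! X : Matrix (Fin p) (Fin q) ℝ,
            (W : Set ((Fin p → ℝ) × (Fin q → ℝ))) = {v | ∃ w, v = (X *ᵥ w, w)})) := by
  have hneg : ∀ v, b v v < 0 ↔ v.1 ⬝ᵥ v.1 < v.2 ⬝ᵥ v.2 := fun v => by rw [hb, sub_neg]; rfl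
  refine ⟨fun X => ?_, fun W hW => ?_⟩
  · simp only [forall_mem_graph_ne_zero_iff, hneg, posDef_one_sub_transpose_mul_self_iff]
  simp only [hneg] at hW
  have hinj := injective_snd_comp_subtype_of_negDef hW
  have hle := LinearMap.finrank_le_finrank_of_injective hinj
  rw [Module.finrank_fin_fun] at hle
  refine ⟨hle, fun hrank => ?_⟩
  have hsurj := (LinearMap.injective_iff_surjective_of_finrank_eq_finrank
    (by rw [hrank, Module.finrank_fin_fun])).1 hinj
  obtain ⟨X, hX⟩ := exists_matrix_eq_graph_of_bijective ⟨hinj, hsurj⟩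
  exact ⟨X, hX, fun Y hY => eq_of_graph_eq (hY.symm.trans hX)⟩
end

section
/- Let p, q : ℕ. On ℝ^p × ℝ^q define the symmetric bilinear form b((x,y),(x',y')) = ∑_i x i * x' i − ∑_j y j * y' j. Let A ∈ Matrix (Fin p) (Fin p) ℝ, B ∈ Matrix (Fin p) (Fin q) ℝ, C ∈ Matrix (Fin q) (Fin p) ℝ, D ∈ Matrix (Fin q) (Fin q) ℝ, and suppose g = fromBlocks A B C D satisfies g * M * gᵀ = M where M is the diagonal matrix with first p entries 1 and last q entries −1 (i.e. g ∈ O(p,q)). Let X ∈ Matrix (Fin p) (Fin q) ℝ with 1 − Xᵀ * X positive definite. Then C * X + D is invertible, the image of W_X = {(X *ᵥ w, w)} under (x,y) ↦ (A *ᵥ x + B *ᵥ y, C *ᵥ x + D *ᵥ y) equals W_{X'} for X' = (A * X + B) * (C * X + D)⁻¹, and 1 − X'ᵀ * X' is positive definite. -/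
/-!
With `J = fromBlocks 1 0 0 (-1)` and `J * J = 1`, the hypothesis `g * J * gᵀ = J` also gives
`gᵀ * J * g = J`, so `Y ↦ g * Y` preserves `Yᵀ * J * Y`. Applied to `Y = fromRows X 1`, whose
image is `fromRows (A * X + B) (C * X + D)`, this yields
`(C * X + D)ᵀ * (C * X + D) = (A * X + B)ᵀ * (A * X + B) + (1 - Xᵀ * X)`.
The right side is positive definite, so `C * X + D` is invertible, and conjugating the identity by
`(C * X + D)⁻¹` gives `1 - X'ᵀ * X' = (C * X + D)⁻ᵀ * (1 - Xᵀ * X) * (C * X + D)⁻¹`.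
-/

open Matrix

namespace Matrix

variable {R ι m n : Type*} [CommRing R]

theorem transpose_mul_mul_self_eq_of_mul_mul_transpose_eq [Fintype ι] [DecidableEq ι]
    {g J : Matrix ι ι R} (hJ : J * J = 1) (hg : g * J * gᵀ = J) : gᵀ * J * g = J := by
  have hinv : (J * gᵀ * J) * g = 1 := mul_eq_one_comm.mp <| by
    calc g * (J * gᵀ * J) = (g * J * gᵀ) * J := by simp only [Matrix.mul_assoc]
      _ = 1 := by rw [hg, hJ]
  calc gᵀ * J * g = (J * J) * (gᵀ * J * g) := by rw [hJ, Matrix.one_mul]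
    _ = J * ((J * gᵀ * J) * g) := by simp only [Matrix.mul_assoc]
    _ = J := by rw [hinv, Matrix.mul_one]

theorem fromBlocks_one_zero_zero_neg_one_mul_self [Fintype m] [Fintype n] [DecidableEq m]
    [DecidableEq n] :
    (fromBlocks 1 0 0 (-1) : Matrix (m ⊕ n) (m ⊕ n) R) * fromBlocks 1 0 0 (-1) = 1 := by
  simp [fromBlocks_multiply, ← fromBlocks_one]

theorem transpose_fromRows_mul_fromBlocks_one_neg_one_mul_fromRows [Fintype m] [Fintype n]
    [DecidableEq m] [DecidableEq n] {k : Type*} (U : Matrix m k R) (V : Matrix n k R) :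
    (fromRows U V)ᵀ * fromBlocks (1 : Matrix m m R) 0 0 (-1 : Matrix n n R) * fromRows U V =
      Uᵀ * U - Vᵀ * V := by
  rw [transpose_fromRows, fromCols_mul_fromBlocks, fromCols_mul_fromRows]
  simp [sub_eq_add_neg]

theorem transpose_mul_mul_mul_eq_of_transpose_mul_mul_self_eq [Fintype ι] {k : Type*}
    {g J : Matrix ι ι R} (hg : gᵀ * J * g = J) (Y : Matrix ι k R) :
    (g * Y)ᵀ * J * (g * Y) = Yᵀ * J * Y := by
  calc (g * Y)ᵀ * J * (g * Y) = Yᵀ * (gᵀ * J * g) * Y := by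
        simp only [transpose_mul, Matrix.mul_assoc]
    _ = Yᵀ * J * Y := by rw [hg]

theorem transpose_mul_self_mul_add_eq_of_fromBlocks_preserves_form [Fintype m] [Fintype n]
    [DecidableEq m] [DecidableEq n] {A : Matrix m m R} {B : Matrix m n R} {C : Matrix n m R}
    {D : Matrix n n R}
    (hg : (fromBlocks A B C D)ᵀ * fromBlocks 1 0 0 (-1) * fromBlocks A B C D =
      fromBlocks 1 0 0 (-1))
    (X : Matrix m n R) :
    (C * X + D)ᵀ * (C * X + D) = (A * X + B)ᵀ * (A * X + B) + (1 - Xᵀ * X) := by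
  have h := transpose_mul_mul_mul_eq_of_transpose_mul_mul_self_eq hg
    (fromRows X (1 : Matrix n n R))
  rw [fromBlocks_mul_fromRows, Matrix.mul_one, Matrix.mul_one,
    transpose_fromRows_mul_fromBlocks_one_neg_one_mul_fromRows,
    transpose_fromRows_mul_fromBlocks_one_neg_one_mul_fromRows, transpose_one,
    Matrix.one_mul] at h
  rw [← neg_sub, ← h]
  abel

theorem isUnit_of_isUnit_transpose_mul_self [Fintype n] [DecidableEq n] {Y : Matrix n n R}
    (h : IsUnit (Yᵀ * Y)) : IsUnit Y := by
  rw [isUnit_iff_isUnit_det, det_mul, det_transpose, isUnit_mul_self_iff] at h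
  exact (isUnit_iff_isUnit_det Y).mpr h

theorem image_graph_eq_graph_mul_inv [Fintype m] [Fintype n] [DecidableEq n]
    (A : Matrix m m R) (B : Matrix m n R) (C : Matrix n m R) (D : Matrix n n R)
    {X : Matrix m n R} (hY : IsUnit (C * X + D)) :
    (fun v : (m → R) × (n → R) => (A *ᵥ v.1 + B *ᵥ v.2, C *ᵥ v.1 + D *ᵥ v.2)) ''
        {v | ∃ w, v = (X *ᵥ w, w)} =
      {v | ∃ w, v = (((A * X + B) * (C * X + D)⁻¹) *ᵥ w, w)} := by
  have hdet := (isUnit_iff_isUnit_det _).mp hY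
  have hgraph : ∀ w, (A *ᵥ (X *ᵥ w) + B *ᵥ w, C *ᵥ (X *ᵥ w) + D *ᵥ w) =
      ((A * X + B) *ᵥ w, (C * X + D) *ᵥ w) := by
    simp [add_mulVec, mulVec_mulVec]
  ext v
  constructor
  · rintro ⟨_, ⟨w, rfl⟩, rfl⟩
    exact ⟨(C * X + D) *ᵥ w, by
      dsimp only
      rw [hgraph, mulVec_mulVec, Matrix.mul_assoc, nonsing_inv_mul _ hdet, Matrix.mul_one]⟩
  · rintro ⟨u, rfl⟩
    refine ⟨_, ⟨(C * X + D)⁻¹ *ᵥ u, rfl⟩, ?_⟩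
    dsimp only
    rw [hgraph, mulVec_mulVec, mulVec_mulVec, mul_nonsing_inv _ hdet, one_mulVec]

theorem PosDef.one_sub_transpose_mul_self_mul_inv {K : Type*} [Field K] [PartialOrder K]
    [StarRing K] [TrivialStar K] [Fintype m] [Fintype n] [DecidableEq n]
    {E : Matrix m n K} {Y S : Matrix n n K} (hS : S.PosDef) (hY : IsUnit Y)
    (hYE : Yᵀ * Y = Eᵀ * E + S) :
    (1 - (E * Y⁻¹)ᵀ * (E * Y⁻¹)).PosDef := by
  have hdet := (isUnit_iff_isUnit_det _).mp hY
  have hconj : 1 - (E * Y⁻¹)ᵀ * (E * Y⁻¹) = (Y⁻¹)ᴴ * S * Y⁻¹ := by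
    calc 1 - (E * Y⁻¹)ᵀ * (E * Y⁻¹)
        = (Y * Y⁻¹)ᵀ * (Y * Y⁻¹) - (E * Y⁻¹)ᵀ * (E * Y⁻¹) := by
          rw [mul_nonsing_inv _ hdet, transpose_one, Matrix.one_mul]
      _ = (Y⁻¹)ᴴ * (Yᵀ * Y - Eᵀ * E) * Y⁻¹ := by
          simp only [conjTranspose_eq_transpose_of_trivial, transpose_mul, Matrix.mul_sub,
            Matrix.sub_mul, Matrix.mul_assoc]
      _ = (Y⁻¹)ᴴ * S * Y⁻¹ := by rw [hYE, add_sub_cancel_left]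
  rw [hconj]
  exact hS.conjTranspose_mul_mul_same <|
    mulVec_injective_iff_isUnit.mpr (isUnit_nonsing_inv_iff.mpr hY)

end Matrix

theorem stmt_16_general (p q : ℕ)
    (A : Matrix (Fin p) (Fin p) ℝ) (B : Matrix (Fin p) (Fin q) ℝ)
    (C : Matrix (Fin q) (Fin p) ℝ) (D : Matrix (Fin q) (Fin q) ℝ)
    (M : Matrix (Fin p ⊕ Fin q) (Fin p ⊕ Fin q) ℝ)
    (hM : M = Matrix.fromBlocks 1 0 0 (-1))
    (hg : Matrix.fromBlocks A B C D * M * (Matrix.fromBlocks A B C D).transpose = M)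
    (X : Matrix (Fin p) (Fin q) ℝ)
    (hX : (1 - X.transpose * X).PosDef) :
    IsUnit (C * X + D) ∧
    (fun v : (Fin p → ℝ) × (Fin q → ℝ) =>
        (A *ᵥ v.1 + B *ᵥ v.2, C *ᵥ v.1 + D *ᵥ v.2)) ''
      {v | ∃ w, v = (X *ᵥ w, w)} =
      {v | ∃ w, v = (((A * X + B) * (C * X + D)⁻¹) *ᵥ w, w)} ∧
    (1 - ((A * X + B) * (C * X + D)⁻¹).transpose *
        ((A * X + B) * (C * X + D)⁻¹)).PosDef := by
  subst hM
  have hform := transpose_mul_mul_self_eq_of_mul_mul_transpose_eq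
    fromBlocks_one_zero_zero_neg_one_mul_self hg
  have hYE := transpose_mul_self_mul_add_eq_of_fromBlocks_preserves_form hform X
  have hY : IsUnit (C * X + D) := by
    refine isUnit_of_isUnit_transpose_mul_self (PosDef.isUnit ?_)
    rw [hYE]
    exact PosDef.posSemidef_add (posSemidef_conjTranspose_mul_self (A * X + B)) hX
  exact ⟨hY, image_graph_eq_graph_mul_inv A B C D hY,
    hX.one_sub_transpose_mul_self_mul_inv hY hYE⟩

/-- Linear fractional action of `O(p,q)` on the real bounded symmetric domain
`{X | 1 − Xᵀ X ≫ 0}`: if `g = [[A,B],[C,D]]` preserves the form of signature `(p,q)` and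
`1 − Xᵀ X` is positive definite, then `C X + D` is invertible, `g` maps the graph `W_X` to
`W_{X'}` with `X' = (A X + B)(C X + D)⁻¹`, and `1 − X'ᵀ X'` is positive definite. -/
theorem stmt_16 (p q : ℕ)
    (b : ((Fin p → ℝ) × (Fin q → ℝ)) → ((Fin p → ℝ) × (Fin q → ℝ)) → ℝ)
    (hb : ∀ v v', b v v' = (∑ i, v.1 i * v'.1 i) - ∑ j, v.2 j * v'.2 j)
    (A : Matrix (Fin p) (Fin p) ℝ) (B : Matrix (Fin p) (Fin q) ℝ)
    (C : Matrix (Fin q) (Fin p) ℝ) (D : Matrix (Fin q) (Fin q) ℝ)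
    (M : Matrix (Fin p ⊕ Fin q) (Fin p ⊕ Fin q) ℝ)
    (hM : M = Matrix.fromBlocks 1 0 0 (-1))
    (hg : Matrix.fromBlocks A B C D * M * (Matrix.fromBlocks A B C D).transpose = M)
    (X : Matrix (Fin p) (Fin q) ℝ)
    (hX : (1 - X.transpose * X).PosDef) :
    IsUnit (C * X + D) ∧
    (fun v : (Fin p → ℝ) × (Fin q → ℝ) =>
        (A *ᵥ v.1 + B *ᵥ v.2, C *ᵥ v.1 + D *ᵥ v.2)) ''
      {v | ∃ w, v = (X *ᵥ w, w)} =
      {v | ∃ w, v = (((A * X + B) * (C * X + D)⁻¹) *ᵥ w, w)} ∧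
    (1 - ((A * X + B) * (C * X + D)⁻¹).transpose *
        ((A * X + B) * (C * X + D)⁻¹)).PosDef :=
  stmt_16_general p q A B C D M hM hg X hX
end

section
/- Let p, q : ℕ and ℍ = Quaternion ℝ. Let A ∈ Matrix (Fin p) (Fin p) ℍ, B ∈ Matrix (Fin p) (Fin q) ℍ, C ∈ Matrix (Fin q) (Fin p) ℍ, D ∈ Matrix (Fin q) (Fin q) ℍ, and suppose g = fromBlocks A B C D satisfies g * H * gᴴ = H, where H is the diagonal matrix with first p entries 1 and last q entries −1 and gᴴ is the quaternionic conjugate transpose. Let X ∈ Matrix (Fin p) (Fin q) ℍ be such that (star w ⬝ᵥ ((1 − Xᴴ * X) *ᵥ w)).re > 0 for every nonzero w ∈ (Fin q → ℍ). Then C * X + D is a unit in the ring Matrix (Fin q) (Fin q) ℍ, the image of {(X *ᵥ w, w) | w} under (x,y) ↦ (A *ᵥ x + B *ᵥ y, C *ᵥ x + D *ᵥ y) equals {(X' *ᵥ w, w) | w} where X' = (A * X + B) * Ring.inverse (C * X + D), and (star w ⬝ᵥ ((1 − X'ᴴ * X') *ᵥ w)).re > 0 for every nonzero w. -/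
/-!
Since `H² = 1`, the relation `g H gᴴ = H` says that `H gᴴ H` is a right inverse of `g`; matrix
rings over a division ring are Dedekind-finite, so it is also a left inverse, i.e. `gᴴ H g = H`.
Hence `g` preserves the indefinite form `|x|² - |y|²`. A point of the graph of `X` has
`|X w|² - |w|² < 0` for `w ≠ 0`; if `(C X + D) w = 0`, its image would have form value
`|A X w + B w|² ≥ 0`, so `C X + D` is injective, hence a unit. The image of the graph of `X` is
then the graph of `X'`, and the form is negative on it away from `0`, which is the condition
`1 - X'ᴴ X' ≫ 0`.
-/

open Matrix Quaternion

theorem mul_mul_eq_of_mul_mul_eq_of_mul_self_eq_one {M : Type*} [Monoid M]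
    [IsDedekindFiniteMonoid M] {g b H : M} (hH : H * H = 1) (h : g * H * b = H) : b * H * g = H := by
  have hright : g * (H * b * H) = 1 := by
    rw [← mul_assoc, ← mul_assoc, h, hH]
  calc b * H * g = H * H * (b * H * g) := by rw [hH, one_mul]
    _ = H * ((H * b * H) * g) := by simp only [mul_assoc]
    _ = H := by rw [mul_eq_one_comm.mp hright, mul_one]

namespace Matrix

theorem isUnit_of_mulVec_eq_zero_imp_eq_zero {K n : Type*} [DivisionRing K] [Fintype n]
    [DecidableEq n] {A : Matrix n n K} (h : ∀ w, A *ᵥ w = 0 → w = 0) : IsUnit A := by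
  refine IsArtinianRing.isUnit_iff_isLeftRegular.mpr
    (isLeftRegular_iff_mulVec_injective.mpr fun v w hvw => sub_eq_zero.mp (h _ ?_))
  rw [mulVec_sub, hvw, sub_self]

variable {R : Type*} [Ring R] {l m n : Type*}

def graph [Fintype n] (X : Matrix m n R) : Set ((m → R) × (n → R)) :=
  {v | ∃ w, v = (X *ᵥ w, w)}

theorem image_graph_eq_graph_mul_inverse [Fintype m] [Fintype n] [DecidableEq n]
    {A : Matrix l m R} {B : Matrix l n R} {C : Matrix n m R} {D : Matrix n n R}
    {X : Matrix m n R} (hU : IsUnit (C * X + D)) :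
    (fun v : (m → R) × (n → R) => (A *ᵥ v.1 + B *ᵥ v.2, C *ᵥ v.1 + D *ᵥ v.2)) ''
      graph X = graph ((A * X + B) * Ring.inverse (C * X + D)) := by
  have hmap : ∀ w, (A *ᵥ (X *ᵥ w) + B *ᵥ w, C *ᵥ (X *ᵥ w) + D *ᵥ w)
      = ((A * X + B) *ᵥ w, (C * X + D) *ᵥ w) := by
    intro w
    simp only [add_mulVec, mulVec_mulVec]
  ext v
  constructor
  · rintro ⟨_, ⟨w, rfl⟩, rfl⟩
    refine ⟨(C * X + D) *ᵥ w, (hmap w).trans ?_⟩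
    rw [mulVec_mulVec, Matrix.mul_assoc, Ring.inverse_mul_cancel _ hU, Matrix.mul_one]
  · rintro ⟨w, rfl⟩
    refine ⟨_, ⟨Ring.inverse (C * X + D) *ᵥ w, rfl⟩, (hmap _).trans ?_⟩
    rw [mulVec_mulVec, mulVec_mulVec, Ring.mul_inverse_cancel _ hU, one_mulVec]

variable [StarRing R]

theorem star_dotProduct_one_sub_conjTranspose_mul_self_mulVec [Fintype m] [Fintype n]
    [DecidableEq n] (N : Matrix m n R) (w : n → R) :
    star w ⬝ᵥ ((1 - Nᴴ * N) *ᵥ w) =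
      star w ⬝ᵥ w - star (N *ᵥ w) ⬝ᵥ (N *ᵥ w) := by
  rw [sub_mulVec, one_mulVec, dotProduct_sub, ← mulVec_mulVec, dotProduct_mulVec,
    ← star_mulVec]

theorem star_mulVec_dotProduct_mulVec_of_conjTranspose_mul_mul_self_eq [Fintype n]
    {H M : Matrix n n R} (hM : Mᴴ * H * M = H) (v : n → R) :
    star (M *ᵥ v) ⬝ᵥ (H *ᵥ (M *ᵥ v)) = star v ⬝ᵥ (H *ᵥ v) := by
  rw [star_mulVec, dotProduct_mulVec, vecMul_vecMul, dotProduct_mulVec, vecMul_vecMul, hM,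
    ← dotProduct_mulVec]

theorem star_sumElim_dotProduct_fromBlocks_one_neg_one_mulVec [Fintype m] [Fintype n]
    [DecidableEq m] [DecidableEq n] (a : m → R) (b : n → R) :
    star (Sum.elim a b) ⬝ᵥ (fromBlocks (1 : Matrix m m R) 0 0 (-1) *ᵥ Sum.elim a b)
      = star a ⬝ᵥ a - star b ⬝ᵥ b := by
  have hstar : star (Sum.elim a b) = Sum.elim (star a) (star b) := by
    funext i; cases i <;> rfl
  rw [hstar, fromBlocks_mulVec]
  simp [sumElim_dotProduct_sumElim, neg_mulVec, sub_eq_add_neg]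

theorem star_dotProduct_sub_eq_of_fromBlocks_isometry [Fintype m] [Fintype n]
    [DecidableEq m] [DecidableEq n]
    {A : Matrix m m R} {B : Matrix m n R} {C : Matrix n m R} {D : Matrix n n R}
    (h : (fromBlocks A B C D)ᴴ * fromBlocks 1 0 0 (-1) * fromBlocks A B C D =
      fromBlocks 1 0 0 (-1))
    (x : m → R) (y : n → R) :
    star (A *ᵥ x + B *ᵥ y) ⬝ᵥ (A *ᵥ x + B *ᵥ y) -
        star (C *ᵥ x + D *ᵥ y) ⬝ᵥ (C *ᵥ x + D *ᵥ y) =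
      star x ⬝ᵥ x - star y ⬝ᵥ y := by
  have := star_mulVec_dotProduct_mulVec_of_conjTranspose_mul_mul_self_eq h (Sum.elim x y)
  rwa [fromBlocks_mulVec, Sum.elim_comp_inl, Sum.elim_comp_inr,
    star_sumElim_dotProduct_fromBlocks_one_neg_one_mulVec,
    star_sumElim_dotProduct_fromBlocks_one_neg_one_mulVec] at this

end Matrix

theorem Quaternion.re_star_dotProduct_self_nonneg {n : Type*} [Fintype n] (u : n → ℍ[ℝ]) :
    0 ≤ (star u ⬝ᵥ u).re :=
  Finset.sum_induction _ (fun a : ℍ[ℝ] => 0 ≤ a.re) (fun _ _ ha hb => add_nonneg ha hb) le_rfl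
    fun i _ => by
      rw [Pi.star_apply, Quaternion.star_mul_self, Quaternion.re_coe]
      exact normSq_nonneg

theorem Quaternion.re_star_dotProduct_one_sub_conjTranspose_mul_self_mulVec {m n : Type*}
    [Fintype m] [Fintype n] [DecidableEq n] (N : Matrix m n ℍ[ℝ]) (w : n → ℍ[ℝ]) :
    (star w ⬝ᵥ ((1 - Nᴴ * N) *ᵥ w)).re =
      (star w ⬝ᵥ w).re - (star (N *ᵥ w) ⬝ᵥ (N *ᵥ w)).re := by
  rw [star_dotProduct_one_sub_conjTranspose_mul_self_mulVec, Quaternion.re_sub]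

/-- Linear fractional action of `Sp(p,q)` on the quaternionic bounded symmetric domain
`{X | 1 − Xᴴ X ≫ 0}`: if `g = [[A,B],[C,D]]` satisfies `g H gᴴ = H` and `1 − Xᴴ X` is
positive definite, then `C X + D` is a unit, `g` maps the graph of `X` to the graph of
`X' = (A X + B)(C X + D)⁻¹`, and `1 − X'ᴴ X'` is positive definite. -/
theorem stmt_18 (p q : ℕ)
    (A : Matrix (Fin p) (Fin p) (Quaternion ℝ)) (B : Matrix (Fin p) (Fin q) (Quaternion ℝ))
    (C : Matrix (Fin q) (Fin p) (Quaternion ℝ)) (D : Matrix (Fin q) (Fin q) (Quaternion ℝ))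
    (H : Matrix (Fin p ⊕ Fin q) (Fin p ⊕ Fin q) (Quaternion ℝ))
    (hH : H = Matrix.fromBlocks 1 0 0 (-1))
    (hg : Matrix.fromBlocks A B C D * H * (Matrix.fromBlocks A B C D).conjTranspose = H)
    (X : Matrix (Fin p) (Fin q) (Quaternion ℝ))
    (hX : ∀ w : Fin q → Quaternion ℝ, w ≠ 0 →
      (star w ⬝ᵥ ((1 - X.conjTranspose * X) *ᵥ w)).re > 0) :
    IsUnit (C * X + D) ∧
    (fun v : (Fin p → Quaternion ℝ) × (Fin q → Quaternion ℝ) =>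
        (A *ᵥ v.1 + B *ᵥ v.2, C *ᵥ v.1 + D *ᵥ v.2)) ''
      {v | ∃ w, v = (X *ᵥ w, w)} =
      {v | ∃ w, v = (((A * X + B) * Ring.inverse (C * X + D)) *ᵥ w, w)} ∧
    (∀ w : Fin q → Quaternion ℝ, w ≠ 0 →
      (star w ⬝ᵥ ((1 - ((A * X + B) * Ring.inverse (C * X + D)).conjTranspose *
        ((A * X + B) * Ring.inverse (C * X + D))) *ᵥ w)).re > 0) := by
  subst hH
  have hHH : (fromBlocks 1 0 0 (-1) : Matrix (Fin p ⊕ Fin q) (Fin p ⊕ Fin q) ℍ[ℝ]) *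
      fromBlocks 1 0 0 (-1) = 1 := by
    simp [fromBlocks_multiply, fromBlocks_one]
  have hgH := mul_mul_eq_of_mul_mul_eq_of_mul_self_eq_one hHH hg
  have hiso (x : Fin p → ℍ[ℝ]) (y : Fin q → ℍ[ℝ]) :
      (star (A *ᵥ x + B *ᵥ y) ⬝ᵥ (A *ᵥ x + B *ᵥ y)).re -
        (star (C *ᵥ x + D *ᵥ y) ⬝ᵥ (C *ᵥ x + D *ᵥ y)).re =
      (star x ⬝ᵥ x).re - (star y ⬝ᵥ y).re := by
    simpa using
      congrArg QuaternionAlgebra.re (star_dotProduct_sub_eq_of_fromBlocks_isometry hgH x y)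
  have hcontr (w : Fin q → ℍ[ℝ]) (hw : w ≠ 0) :
      (star (X *ᵥ w) ⬝ᵥ (X *ᵥ w)).re < (star w ⬝ᵥ w).re := by
    rw [← sub_pos, ← re_star_dotProduct_one_sub_conjTranspose_mul_self_mulVec]
    exact hX w hw
  have hU : IsUnit (C * X + D) := isUnit_of_mulVec_eq_zero_imp_eq_zero fun w hw0 => by
    by_contra hw
    have := hiso (X *ᵥ w) w
    have hCD : C *ᵥ (X *ᵥ w) + D *ᵥ w = 0 := by rwa [mulVec_mulVec, ← add_mulVec]
    simp only [hCD, star_zero, zero_dotProduct, Quaternion.re_zero, sub_zero] at this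
    linarith [hcontr w hw, re_star_dotProduct_self_nonneg (A *ᵥ (X *ᵥ w) + B *ᵥ w)]
  have himage := image_graph_eq_graph_mul_inverse (A := A) (B := B) hU
  refine ⟨hU, himage, fun w hw => ?_⟩
  obtain ⟨_, ⟨u, rfl⟩, huw⟩ :
      (((A * X + B) * Ring.inverse (C * X + D)) *ᵥ w, w) ∈ _ '' graph X := by
    rw [himage]
    exact ⟨w, rfl⟩
  obtain ⟨hXw, rfl⟩ := Prod.mk.inj huw
  have hu : u ≠ 0 := by rintro rfl; simp at hw
  rw [re_star_dotProduct_one_sub_conjTranspose_mul_self_mulVec, ← hXw]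
  linarith [hiso (X *ᵥ u) u, hcontr u hu]
end

section
/- Let n : ℕ and Z ∈ (Fin n → ℂ). Set s = ∑_i ‖Z i‖² and t = ‖∑_i (Z i)²‖ (complex absolute value). Suppose 1 − s > Real.sqrt (s² − t²). Then s < 1, and for every real r with 0 ≤ r ≤ 1 one has 1 − r² * s > Real.sqrt ((r² * s)² − (r² * t)²); that is, the scaled vector r • Z again satisfies the defining inequality of the domain. -/
/-- The bounded realization `D'₀ = {Z | 1 − s > √(s² − t²)}` (with `s = ∑‖Zᵢ‖²`,
`t = ‖∑ Zᵢ²‖`) of the symmetric domain of `SO(n,2)` is contained in the unit ball `s < 1`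
and is star-shaped about the origin: every scaling `r • Z`, `0 ≤ r ≤ 1`, again satisfies
the defining inequality. -/
theorem stmt_19 (n : ℕ) (Z : Fin n → ℂ) (s t : ℝ)
    (hs : s = ∑ i, ‖Z i‖ ^ 2) (ht : t = ‖∑ i, (Z i) ^ 2‖)
    (hZ : 1 - s > Real.sqrt (s ^ 2 - t ^ 2)) :
    s < 1 ∧
    ∀ r : ℝ, 0 ≤ r → r ≤ 1 →
      1 - r ^ 2 * s > Real.sqrt ((r ^ 2 * s) ^ 2 - (r ^ 2 * t) ^ 2) := by
  have hs0 : 0 ≤ s := by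
    rw [hs]; exact Finset.sum_nonneg fun i _ => sq_nonneg _
  have hsqrt : (0:ℝ) ≤ Real.sqrt (s ^ 2 - t ^ 2) := Real.sqrt_nonneg _
  have hslt : s < 1 := by linarith
  refine ⟨hslt, fun r hr0 hr1 => ?_⟩
  set u := r ^ 2 with hu
  have hu0 : 0 ≤ u := sq_nonneg r
  have hu1 : u ≤ 1 := by nlinarith
  have key : (u * s) ^ 2 - (u * t) ^ 2 = u ^ 2 * (s ^ 2 - t ^ 2) := by ring
  rw [key, Real.sqrt_mul (sq_nonneg u), Real.sqrt_sq hu0]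
  rcases eq_or_lt_of_le hu0 with h | h
  · simp [← h]
  · have h1 : u * Real.sqrt (s ^ 2 - t ^ 2) < u * (1 - s) :=
      mul_lt_mul_of_pos_left hZ h
    nlinarith
end
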